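/- arXiv:2402.15194 — 2 statements merged into one kernel-verified Lean document; each statement's English description precedes it below -/
import Mathlib

section
/- Let Ω and E be standard Borel spaces, let μ be a probability measure on Ω, let T : Ω → E be measurable, and let h : E → [0,∞) be measurable with C := ∫ (h ∘ T) dμ ∈ (0,∞). Let μ* be the measure with density (h∘T)/C with respect to μ. Then the regular conditional distribution of the identity given T under μ* agrees with the regular conditional distribution of the identity given T under μ, for (μ*.map T)-almost every point of E. -/
/-!
The joint law of `(T, id)` under `μ` is `μ.map T ⊗ₘ condDistrib id T μ`. A density that factors
through `T` becomes, on the joint law, a density in the first coordinate only, and such a density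
can be moved onto the marginal: the tilted joint law is `μstar.map T ⊗ₘ condDistrib id T μ`.
Uniqueness of disintegrations then identifies the kernel with `condDistrib id T μstar`.
-/

open MeasureTheory ProbabilityTheory
open scoped ENNReal

namespace MeasureTheory.Measure

variable {α β : Type*} [MeasurableSpace α] [MeasurableSpace β]

lemma map_withDensity_comp (μ : Measure α) {f : α → β} (hf : Measurable f) {g : β → ℝ≥0∞}
    (hg : Measurable g) :
    (μ.withDensity fun a => g (f a)).map f = (μ.map f).withDensity g := by
  ext s hs
  rw [map_apply hf hs, withDensity_apply _ (hf hs), withDensity_apply _ hs,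
    setLIntegral_map hs hg hf]

lemma withDensity_compProd_left (ν : Measure α) [SFinite ν] (κ : Kernel α β)
    [IsSFiniteKernel κ] {g : α → ℝ≥0∞} (hg : Measurable g) :
    ν.withDensity g ⊗ₘ κ = (ν ⊗ₘ κ).withDensity fun p => g p.1 := by
  ext s hs
  rw [withDensity_apply _ hs, compProd_apply hs,
    lintegral_withDensity_eq_lintegral_mul _ hg (Kernel.measurable_kernel_prodMk_left hs),
    ← lintegral_indicator hs, lintegral_compProd
      ((show Measurable fun p : α × β => g p.1 from hg.comp measurable_fst).indicator hs)]
  refine lintegral_congr fun a => ?_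
  have h_slice : (fun b => s.indicator (fun p : α × β => g p.1) (a, b))
      = (Prod.mk a ⁻¹' s).indicator fun _ => g a := by
    ext b
    by_cases hab : (a, b) ∈ s <;> simp [Set.indicator, hab]
  rw [h_slice, lintegral_indicator_const (measurable_prodMk_left hs)]
  rfl

end MeasureTheory.Measure

namespace ProbabilityTheory

variable {α β Ω : Type*} [MeasurableSpace α] [MeasurableSpace β] [MeasurableSpace Ω]
  [StandardBorelSpace Ω] [Nonempty Ω]

theorem condDistrib_withDensity_comp_ae_eq {μ : Measure α} [IsFiniteMeasure μ] {X : α → β}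
    {Y : α → Ω} (hX : Measurable X) (hY : Measurable Y) {g : β → ℝ≥0∞} (hg : Measurable g)
    [IsFiniteMeasure (μ.withDensity fun a => g (X a))] :
    condDistrib Y X (μ.withDensity fun a => g (X a))
      =ᵐ[(μ.withDensity fun a => g (X a)).map X] condDistrib Y X μ := by
  refine condDistrib_ae_eq_of_measure_eq_compProd X hY.aemeasurable ?_
  calc (μ.withDensity fun a => g (X a)).map (fun a => (X a, Y a))
      = (μ.map fun a => (X a, Y a)).withDensity fun p => g p.1 :=
        Measure.map_withDensity_comp μ (hX.prodMk hY) (hg.comp measurable_fst)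
    _ = (μ.map X ⊗ₘ condDistrib Y X μ).withDensity fun p => g p.1 := by
        rw [compProd_map_condDistrib hY.aemeasurable]
    _ = (μ.map X).withDensity g ⊗ₘ condDistrib Y X μ :=
        (Measure.withDensity_compProd_left _ _ hg).symm
    _ = (μ.withDensity fun a => g (X a)).map X ⊗ₘ condDistrib Y X μ := by
        rw [Measure.map_withDensity_comp μ hX hg]

end ProbabilityTheory

theorem bridge_preserved_general {Ω E : Type*}
    [MeasurableSpace Ω] [StandardBorelSpace Ω] [Nonempty Ω]
    [MeasurableSpace E]
    (μ : Measure Ω) [IsProbabilityMeasure μ] (T : Ω → E) (hT : Measurable T)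
    (h : E → ℝ) (hh : Measurable h)
    (C : ℝ)
    (μstar : Measure Ω) [IsFiniteMeasure μstar]
    (hμstar : μstar = μ.withDensity fun ω => ENNReal.ofReal (h (T ω) / C)) :
    ∀ᵐ e ∂(μstar.map T), condDistrib id T μstar e = condDistrib id T μ e := by
  subst hμstar
  exact condDistrib_withDensity_comp_ae_eq (g := fun e => ENNReal.ofReal (h e / C)) hT
    measurable_id (hh.div_const C).ennreal_ofReal

/-- Bridge preservation (the paper's Lemma 6): tilting a probability measure `μ` on a
standard Borel space by a function `h ∘ T` of a measurable map `T` (normalized by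
`C = ∫ h ∘ T dμ ∈ (0,∞)`) does not change the regular conditional distribution of the
identity given `T`: the conditional kernels under `μ*` and under `μ` agree
`(μ*.map T)`-almost everywhere. -/
theorem bridge_preserved {Ω E : Type*}
    [MeasurableSpace Ω] [StandardBorelSpace Ω] [Nonempty Ω]
    [MeasurableSpace E] [StandardBorelSpace E]
    (μ : Measure Ω) [IsProbabilityMeasure μ] (T : Ω → E) (hT : Measurable T)
    (h : E → ℝ) (hh : Measurable h) (hh0 : ∀ y, 0 ≤ h y)
    (C : ℝ) (hC : C = ∫ ω, h (T ω) ∂μ) (hCpos : 0 < C)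
    (μstar : Measure Ω) [IsFiniteMeasure μstar]
    (hμstar : μstar = μ.withDensity fun ω => ENNReal.ofReal (h (T ω) / C)) :
    ∀ᵐ e ∂(μstar.map T), condDistrib id T μstar e = condDistrib id T μ e :=
  bridge_preserved_general μ T hT h hh C μstar hμstar
end

section
/- Let d be a positive integer, E := EuclideanSpace ℝ (Fin d), σ : ℝ → ℝ, C > 0, and let f : ℝ → E → E, p : ℝ → E → ℝ, w : ℝ → E → ℝ all be twice continuously differentiable in (t,x), with w(t,x) > 0 for all (t,x). Assume for all (t,x): (i) ∂_t p(t,x) + div_x(x ↦ p(t,x)·f(t,x)) − (σ(t)²/2)·Δ_x p(t,x) = 0, and (ii) ∂_t w(t,x) + ⟨f(t,x), ∇_x w(t,x)⟩ + (σ(t)²/2)·Δ_x w(t,x) = 0, where div_x of a vector field is the sum of the partial derivatives of its coordinates along standard coordinates. Define u(t,x) := (σ(t)²/w(t,x))·∇_x w(t,x) and g(t,x) := w(t,x)·p(t,x)/C. Then for all (t,x), ∂_t g(t,x) + div_x(x ↦ g(t,x)·(f(t,x) + u(t,x))) − (σ(t)²/2)·Δ_x g(t,x) = 0. -/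
open scoped RealInnerProductSpace

/-- Second partial derivative of `φ : E → ℝ` along the `i`-th standard coordinate. -/
noncomputable def secondPartial {d : ℕ} (φ : EuclideanSpace ℝ (Fin d) → ℝ) (i : Fin d)
    (x : EuclideanSpace ℝ (Fin d)) : ℝ :=
  fderiv ℝ (fun y => fderiv ℝ φ y (EuclideanSpace.single i 1)) x (EuclideanSpace.single i 1)

/-- Laplacian of `φ : E → ℝ`: the sum of its second partial derivatives along the
standard coordinates. -/
noncomputable def lapl {d : ℕ} (φ : EuclideanSpace ℝ (Fin d) → ℝ)
    (x : EuclideanSpace ℝ (Fin d)) : ℝ :=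
  ∑ i, secondPartial φ i x

/-- Divergence of a vector field `F : E → E`: the sum of the partial derivatives of its
coordinates along the standard coordinates. -/
noncomputable def diverg {d : ℕ} (F : EuclideanSpace ℝ (Fin d) → EuclideanSpace ℝ (Fin d))
    (x : EuclideanSpace ℝ (Fin d)) : ℝ :=
  ∑ i, fderiv ℝ (fun y => F y i) x (EuclideanSpace.single i 1)

/-! The tilt `g = w p / C` is a product, so its forward operator splits by the Leibniz rules for
`∂ₜ`, `div (φ • F)` and `Δ (φ ψ)`. Since `g u = (σ² p / C) ∇w`, the extra drift contributes
`σ² (⟪∇w, ∇p⟫ + p Δw) / C`: this cancels the cross term of `Δ g` and flips the sign of the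
`p Δw` term, leaving `p / C` times the backward equation for `w` plus `w / C` times the forward
equation for `p`. -/

section RealValued

variable {V : Type*} [NormedAddCommGroup V] [NormedSpace ℝ V]

theorem fderiv_fun_mul_apply {a b : V → ℝ} {x : V} (ha : DifferentiableAt ℝ a x)
    (hb : DifferentiableAt ℝ b x) (v : V) :
    fderiv ℝ (fun y => a y * b y) x v = fderiv ℝ a x v * b x + a x * fderiv ℝ b x v := by
  rw [fderiv_fun_mul ha hb]
  simp only [add_apply, smul_apply, smul_eq_mul]
  ring

theorem fderiv_fun_const_mul (c : ℝ) (a : V → ℝ) : fderiv ℝ (fun y => c * a y) = c • fderiv ℝ a :=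
  fderiv_const_smul_field (f := a) c

theorem ContDiff.differentiable_fderiv_apply {φ : V → ℝ} (hφ : ContDiff ℝ 2 φ) (v : V) :
    Differentiable ℝ (fun y => fderiv ℝ φ y v) := fun y =>
  ((hφ.fderiv_right (m := 1) one_add_one_eq_two.le).differentiable one_ne_zero y).clm_apply
    (differentiableAt_const v)

end RealValued

section VectorCalculus

variable {d : ℕ}

local notation "E" => EuclideanSpace ℝ (Fin d)

theorem sum_mul_fderiv_single (φ : E → ℝ) (v x : E) :
    ∑ i, v i * fderiv ℝ φ x (EuclideanSpace.single i 1) = ⟪v, gradient φ x⟫ := by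
  rw [real_inner_comm, inner_gradient_left]
  conv_rhs => rw [← (EuclideanSpace.basisFun (Fin d) ℝ).toBasis.sum_repr v]
  simp [map_sum, EuclideanSpace.basisFun_apply]

theorem gradient_apply_coord (φ : E → ℝ) (x : E) (i : Fin d) :
    gradient φ x i = fderiv ℝ φ x (EuclideanSpace.single i 1) := by
  rw [← inner_gradient_left, EuclideanSpace.inner_single_right]
  simp

theorem ContDiff.differentiable_gradient {φ : E → ℝ} (hφ : ContDiff ℝ 2 φ) :
    Differentiable ℝ (gradient φ) := by
  refine differentiable_piLp 2 |>.2 fun i => ?_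
  simpa only [gradient_apply_coord] using hφ.differentiable_fderiv_apply _

theorem diverg_gradient (φ : E → ℝ) : diverg (gradient φ) = lapl φ := by
  ext x
  simp only [diverg, lapl, secondPartial, gradient_apply_coord]

theorem diverg_const_smul (c : ℝ) (F : E → E) (x : E) :
    diverg (fun y => c • F y) x = c * diverg F x := by
  simp only [diverg, Finset.mul_sum, PiLp.smul_apply, smul_eq_mul, fderiv_fun_const_mul,
    Pi.smul_apply, smul_apply]

theorem diverg_add {F G : E → E} {x : E} (hF : DifferentiableAt ℝ F x)
    (hG : DifferentiableAt ℝ G x) :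
    diverg (fun y => F y + G y) x = diverg F x + diverg G x := by
  simp only [diverg, PiLp.add_apply, ← Finset.sum_add_distrib]
  refine Finset.sum_congr rfl fun i _ => ?_
  rw [fderiv_fun_add (differentiableAt_piLp 2 |>.1 hF i) (differentiableAt_piLp 2 |>.1 hG i)]
  rfl

theorem diverg_smul {φ : E → ℝ} {F : E → E} {x : E} (hφ : DifferentiableAt ℝ φ x)
    (hF : DifferentiableAt ℝ F x) :
    diverg (fun y => φ y • F y) x = ⟪F x, gradient φ x⟫ + φ x * diverg F x := by
  simp only [diverg, PiLp.smul_apply, smul_eq_mul, ← sum_mul_fderiv_single, Finset.mul_sum,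
    ← Finset.sum_add_distrib]
  refine Finset.sum_congr rfl fun i _ => ?_
  rw [fderiv_fun_mul_apply hφ (differentiableAt_piLp 2 |>.1 hF i)]
  ring

theorem secondPartial_mul {φ ψ : E → ℝ} (hφ : ContDiff ℝ 2 φ) (hψ : ContDiff ℝ 2 ψ) (i : Fin d)
    (x : E) :
    secondPartial (fun y => φ y * ψ y) i x =
      secondPartial φ i x * ψ x
        + 2 * (fderiv ℝ φ x (EuclideanSpace.single i 1) * fderiv ℝ ψ x (EuclideanSpace.single i 1))
        + φ x * secondPartial ψ i x := by
  have hφ₁ := hφ.differentiable two_ne_zero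
  have hψ₁ := hψ.differentiable two_ne_zero
  have hφ₂ := hφ.differentiable_fderiv_apply (EuclideanSpace.single i 1)
  have hψ₂ := hψ.differentiable_fderiv_apply (EuclideanSpace.single i 1)
  have leibniz : (fun y => fderiv ℝ (fun z => φ z * ψ z) y (EuclideanSpace.single i 1)) =
      fun y => fderiv ℝ φ y (EuclideanSpace.single i 1) * ψ y
        + φ y * fderiv ℝ ψ y (EuclideanSpace.single i 1) :=
    funext fun y => fderiv_fun_mul_apply (hφ₁ y) (hψ₁ y) _
  rw [secondPartial, leibniz, fderiv_fun_add ((hφ₂ x).fun_mul (hψ₁ x)) ((hφ₁ x).fun_mul (hψ₂ x)),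
    add_apply, fderiv_fun_mul_apply (hφ₂ x) (hψ₁ x), fderiv_fun_mul_apply (hφ₁ x) (hψ₂ x)]
  simp only [secondPartial]
  ring

theorem lapl_mul {φ ψ : E → ℝ} (hφ : ContDiff ℝ 2 φ) (hψ : ContDiff ℝ 2 ψ) (x : E) :
    lapl (fun y => φ y * ψ y) x =
      lapl φ x * ψ x + 2 * ⟪gradient φ x, gradient ψ x⟫ + φ x * lapl ψ x := by
  simp only [lapl, secondPartial_mul hφ hψ, Finset.sum_add_distrib, ← Finset.sum_mul,
    ← Finset.mul_sum, ← sum_mul_fderiv_single, gradient_apply_coord]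

theorem lapl_const_mul (c : ℝ) (φ : E → ℝ) (x : E) :
    lapl (fun y => c * φ y) x = c * lapl φ x := by
  simp only [lapl, secondPartial, fderiv_fun_const_mul, Pi.smul_apply,
    smul_apply, smul_eq_mul, Finset.mul_sum]

end VectorCalculus

theorem forward_equation_tilted_general {d : ℕ} (σ : ℝ → ℝ) (C : ℝ)
    (f : ℝ → EuclideanSpace ℝ (Fin d) → EuclideanSpace ℝ (Fin d))
    (p w : ℝ → EuclideanSpace ℝ (Fin d) → ℝ)
    (hf : ContDiff ℝ 2 (fun q : ℝ × EuclideanSpace ℝ (Fin d) => f q.1 q.2))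
    (hp : ContDiff ℝ 2 (fun q : ℝ × EuclideanSpace ℝ (Fin d) => p q.1 q.2))
    (hw : ContDiff ℝ 2 (fun q : ℝ × EuclideanSpace ℝ (Fin d) => w q.1 q.2))
    (hwpos : ∀ (t : ℝ) (x : EuclideanSpace ℝ (Fin d)), 0 < w t x)
    (hforward : ∀ (t : ℝ) (x : EuclideanSpace ℝ (Fin d)),
      deriv (fun s => p s x) t + diverg (fun y => p t y • f t y) x
        - (σ t) ^ 2 / 2 * lapl (p t) x = 0)
    (hbackward : ∀ (t : ℝ) (x : EuclideanSpace ℝ (Fin d)),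
      deriv (fun s => w s x) t + ⟪f t x, gradient (w t) x⟫
        + (σ t) ^ 2 / 2 * lapl (w t) x = 0)
    (u : ℝ → EuclideanSpace ℝ (Fin d) → EuclideanSpace ℝ (Fin d))
    (hu : ∀ t x, u t x = ((σ t) ^ 2 / w t x) • gradient (w t) x)
    (g : ℝ → EuclideanSpace ℝ (Fin d) → ℝ)
    (hg : ∀ t x, g t x = w t x * p t x / C) :
    ∀ (t : ℝ) (x : EuclideanSpace ℝ (Fin d)),
      deriv (fun s => g s x) t + diverg (fun y => g t y • (f t y + u t y)) x
        - (σ t) ^ 2 / 2 * lapl (g t) x = 0 := by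
  intro t x
  have hwt : ContDiff ℝ 2 (w t) := hw.comp (contDiff_prodMk_right t)
  have hpt : ContDiff ℝ 2 (p t) := hp.comp (contDiff_prodMk_right t)
  have hft : Differentiable ℝ (f t) :=
    (hf.comp (contDiff_prodMk_right t)).differentiable two_ne_zero
  have hwt₁ := hwt.differentiable two_ne_zero
  have hpt₁ := hpt.differentiable two_ne_zero
  have hflux : (fun y => g t y • (f t y + u t y)) = fun y =>
      C⁻¹ • (w t y • (p t y • f t y) + (σ t ^ 2) • (p t y • gradient (w t) y)) := by
    ext y i
    have hwy := (hwpos t y).ne'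
    simp only [hg, hu, PiLp.smul_apply, PiLp.add_apply, smul_eq_mul]
    field_simp
  have hdiv : diverg (fun y => g t y • (f t y + u t y)) x =
      C⁻¹ * (p t x * ⟪f t x, gradient (w t) x⟫ + w t x * diverg (fun y => p t y • f t y) x
      + σ t ^ 2 * (⟪gradient (w t) x, gradient (p t) x⟫ + p t x * lapl (w t) x)) := by
    have hpf : Differentiable ℝ (fun y => p t y • f t y) := hpt₁.smul hft
    have hgw : Differentiable ℝ (gradient (w t)) := hwt.differentiable_gradient
    have hwpf : Differentiable ℝ (fun y => w t y • p t y • f t y) := hwt₁.smul hpf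
    have hpgw : Differentiable ℝ (fun y => σ t ^ 2 • p t y • gradient (w t) y) :=
      (hpt₁.smul hgw).fun_const_smul _
    rw [hflux, diverg_const_smul, diverg_add (hwpf x) (hpgw x),
      diverg_smul (hwt₁ x) (hpf x), diverg_const_smul, diverg_smul (hpt₁ x) (hgw x),
      diverg_gradient, real_inner_smul_left]
  have hlapl : lapl (g t) x = C⁻¹ * (lapl (w t) x * p t x
      + 2 * ⟪gradient (w t) x, gradient (p t) x⟫ + w t x * lapl (p t) x) := by
    rw [show g t = fun y => C⁻¹ * (w t y * p t y) from funext fun y => by rw [hg]; ring,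
      lapl_const_mul, lapl_mul hwt hpt]
  have hdt : deriv (fun s => g s x) t =
      C⁻¹ * (deriv (fun s => w s x) t * p t x + w t x * deriv (fun s => p s x) t) := by
    have hwx : DifferentiableAt ℝ (fun s => w s x) t :=
      (hw.comp (contDiff_prodMk_left x)).differentiable two_ne_zero t
    have hpx : DifferentiableAt ℝ (fun s => p s x) t :=
      (hp.comp (contDiff_prodMk_left x)).differentiable two_ne_zero t
    simp only [hg, deriv_div_const, deriv_fun_mul hwx hpx]
    ring
  rw [hdt, hdiv, hlapl]
  linear_combination (C⁻¹ * p t x) * hbackward t x + (C⁻¹ * w t x) * hforward t x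

/-- PDE verification in the paper's formal proof of Theorem 1: if `p` solves the
Kolmogorov forward (Fokker–Planck) equation of the SDE with drift `f` and diffusion `σ`,
and a positive `w` solves the associated linear backward equation, then
`g := w·p/C` solves the forward equation of the SDE with drift `f + u`, where
`u := (σ²/w)·∇ₓw`. -/
theorem forward_equation_tilted {d : ℕ} (hd : 0 < d) (σ : ℝ → ℝ) (C : ℝ) (hC : 0 < C)
    (f : ℝ → EuclideanSpace ℝ (Fin d) → EuclideanSpace ℝ (Fin d))
    (p w : ℝ → EuclideanSpace ℝ (Fin d) → ℝ)
    (hf : ContDiff ℝ 2 (fun q : ℝ × EuclideanSpace ℝ (Fin d) => f q.1 q.2))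
    (hp : ContDiff ℝ 2 (fun q : ℝ × EuclideanSpace ℝ (Fin d) => p q.1 q.2))
    (hw : ContDiff ℝ 2 (fun q : ℝ × EuclideanSpace ℝ (Fin d) => w q.1 q.2))
    (hwpos : ∀ (t : ℝ) (x : EuclideanSpace ℝ (Fin d)), 0 < w t x)
    (hforward : ∀ (t : ℝ) (x : EuclideanSpace ℝ (Fin d)),
      deriv (fun s => p s x) t + diverg (fun y => p t y • f t y) x
        - (σ t) ^ 2 / 2 * lapl (p t) x = 0)
    (hbackward : ∀ (t : ℝ) (x : EuclideanSpace ℝ (Fin d)),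
      deriv (fun s => w s x) t + ⟪f t x, gradient (w t) x⟫
        + (σ t) ^ 2 / 2 * lapl (w t) x = 0)
    (u : ℝ → EuclideanSpace ℝ (Fin d) → EuclideanSpace ℝ (Fin d))
    (hu : ∀ t x, u t x = ((σ t) ^ 2 / w t x) • gradient (w t) x)
    (g : ℝ → EuclideanSpace ℝ (Fin d) → ℝ)
    (hg : ∀ t x, g t x = w t x * p t x / C) :
    ∀ (t : ℝ) (x : EuclideanSpace ℝ (Fin d)),
      deriv (fun s => g s x) t + diverg (fun y => g t y • (f t y + u t y)) x
        - (σ t) ^ 2 / 2 * lapl (g t) x = 0 :=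
  forward_equation_tilted_general σ C f p w hf hp hw hwpos hforward hbackward u hu g hg
end
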